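/- Let Ω ⊆ ℝⁿ be open and connected, and let u ∈ C²(Ω, ℝ^N) have the form u = a + ξ f on Ω with a ∈ ℝ^N, ξ ∈ 𝕊^{N-1}, and f ∈ C²(Ω, ℝ). Then u solves the ∞-Laplace system (Du ⊗ Du + |Du|² P^⊥(Du) ⊗ I) : D²u = 0 if and only if f solves the scalar ∞-Laplace equation Δ_∞ f = Σ_{i,j} D_i f D_j f D²_{ij} f = 0. -/

import Mathlib

open scoped RealInnerProductSpace BigOperators

noncomputable def frob2 {n N : ℕ} (u : EuclideanSpace ℝ (Fin n) → EuclideanSpace ℝ (Fin N))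
    (x : EuclideanSpace ℝ (Fin n)) : ℝ :=
  ∑ i, ‖fderiv ℝ u x (EuclideanSpace.single i 1)‖ ^ 2

noncomputable def lapl {n N : ℕ} (u : EuclideanSpace ℝ (Fin n) → EuclideanSpace ℝ (Fin N))
    (x : EuclideanSpace ℝ (Fin n)) : EuclideanSpace ℝ (Fin N) :=
  ∑ i, fderiv ℝ (fun y => fderiv ℝ u y (EuclideanSpace.single i 1)) x (EuclideanSpace.single i 1)

noncomputable def perpProj {n N : ℕ}
    (T : EuclideanSpace ℝ (Fin n) →L[ℝ] EuclideanSpace ℝ (Fin N))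
    (w : EuclideanSpace ℝ (Fin N)) : EuclideanSpace ℝ (Fin N) :=
  (Submodule.orthogonalProjectionOnto (LinearMap.range (T.toLinearMap))ᗮ w : EuclideanSpace ℝ (Fin N))

noncomputable def inftyLap {n N : ℕ} (u : EuclideanSpace ℝ (Fin n) → EuclideanSpace ℝ (Fin N))
    (x : EuclideanSpace ℝ (Fin n)) : EuclideanSpace ℝ (Fin N) :=
  fderiv ℝ u x (gradient (fun y => (1/2 : ℝ) * frob2 u y) x)
    + frob2 u x • perpProj (fderiv ℝ u x) (lapl u x)

noncomputable def scalarInftyLap {n : ℕ} (f : EuclideanSpace ℝ (Fin n) → ℝ)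
    (x : EuclideanSpace ℝ (Fin n)) : ℝ :=
  ⟪gradient f x, fderiv ℝ (fun y => gradient f y) x (gradient f x)⟫

noncomputable def DuT {n N : ℕ} (u : EuclideanSpace ℝ (Fin n) → EuclideanSpace ℝ (Fin N))
    (x : EuclideanSpace ℝ (Fin n)) (ξ : EuclideanSpace ℝ (Fin N)) : EuclideanSpace ℝ (Fin n) :=
  ContinuousLinearMap.adjoint (fderiv ℝ u x) ξ

/-! Near a point of `Ω` we have `Du = Df ⊗ ξ` and `|Du|² = |ξ|² |∇f|²`, so the tangential
term `Du ∇(½|Du|²)` equals `|ξ|² (Δ∞ f) ξ`. The Laplacian of `u` is a multiple of `ξ`, which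
lies in the range of `Du` unless `Df = 0`, and then the coefficient `|Du|²` of the normal term
vanishes. Hence `Δ∞ u = |ξ|² (Δ∞ f) ξ` pointwise. -/

open scoped Topology

section Gradient

variable {F : Type*} [NormedAddCommGroup F] [InnerProductSpace ℝ F] [CompleteSpace F]
  {f : F → ℝ} {x : F}

theorem differentiableAt_gradient (hf : DifferentiableAt ℝ (fderiv ℝ f) x) :
    DifferentiableAt ℝ (gradient f) x :=
  ((InnerProductSpace.toDual ℝ F).symm.toContinuousLinearEquiv.toContinuousLinearMap :
    StrongDual ℝ F →L[ℝ] F).differentiableAt.comp x hf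

theorem hasFDerivAt_half_norm_sq_gradient (hf : DifferentiableAt ℝ (gradient f) x) :
    HasFDerivAt (fun y => (1 / 2 : ℝ) * ‖gradient f y‖ ^ 2)
      ((innerSL ℝ (gradient f x)).comp (fderiv ℝ (gradient f) x)) x := by
  refine (hf.hasFDerivAt.norm_sq.const_mul (1 / 2 : ℝ)).congr_fderiv ?_
  ext v
  simp

end Gradient

section InftyLaplacian

variable {n N : ℕ} {u : EuclideanSpace ℝ (Fin n) → EuclideanSpace ℝ (Fin N)}
  {f : EuclideanSpace ℝ (Fin n) → ℝ} {a ξ : EuclideanSpace ℝ (Fin N)}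
  {x : EuclideanSpace ℝ (Fin n)}

theorem gradient_apply_single (i : Fin n) :
    gradient f x i = fderiv ℝ f x (EuclideanSpace.single i 1) := by
  rw [← inner_gradient_left, EuclideanSpace.inner_single_right]
  simp

theorem frob2_eq_of_fderiv_eq_smulRight (hu : fderiv ℝ u x = (fderiv ℝ f x).smulRight ξ) :
    frob2 u x = ‖ξ‖ ^ 2 * ‖gradient f x‖ ^ 2 := by
  rw [EuclideanSpace.real_norm_sq_eq (gradient f x), Finset.mul_sum]
  simp only [frob2, hu, ContinuousLinearMap.smulRight_apply, norm_smul, mul_pow,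
    gradient_apply_single, Real.norm_eq_abs, sq_abs]
  exact Finset.sum_congr rfl fun i _ => mul_comm _ _

theorem perpProj_smulRight_eq_zero {L : EuclideanSpace ℝ (Fin n) →L[ℝ] ℝ} (hL : L ≠ 0)
    {w : EuclideanSpace ℝ (Fin N)} (hw : w ∈ ℝ ∙ ξ) :
    perpProj (L.smulRight ξ) w = 0 := by
  obtain ⟨v, hv⟩ : ∃ v, L v ≠ 0 := by
    by_contra! h
    exact hL (ContinuousLinearMap.ext h)
  have hξ : ξ ∈ LinearMap.range (L.smulRight ξ).toLinearMap :=
    ⟨(L v)⁻¹ • v, by simp [smul_smul, inv_mul_cancel₀ hv]⟩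
  have hw' := (Submodule.span_singleton_le_iff_mem _ _).mpr hξ hw
  rw [perpProj, Submodule.orthogonalProjectionOnto_apply_of_mem_orthogonal
    (Submodule.le_orthogonal_orthogonal _ hw'), ZeroMemClass.coe_zero]

theorem fderiv_eventuallyEq_smulRight (hu : ∀ᶠ y in 𝓝 x, u y = a + f y • ξ)
    (hf : ∀ᶠ y in 𝓝 x, DifferentiableAt ℝ f y) :
    fderiv ℝ u =ᶠ[𝓝 x] fun y => (fderiv ℝ f y).smulRight ξ := by
  filter_upwards [hu.eventually_nhds, hf] with y hy hfy
  rw [Filter.EventuallyEq.fderiv_eq hy, fderiv_const_add, fderiv_smul_const hfy]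

theorem lapl_mem_span (hu : fderiv ℝ u =ᶠ[𝓝 x] fun y => (fderiv ℝ f y).smulRight ξ)
    (hf : DifferentiableAt ℝ (fderiv ℝ f) x) :
    lapl u x ∈ ℝ ∙ ξ := by
  refine Submodule.sum_mem _ fun i _ => ?_
  have hui : (fun y => fderiv ℝ u y (EuclideanSpace.single i 1))
      =ᶠ[𝓝 x] fun y => fderiv ℝ f y (EuclideanSpace.single i 1) • ξ :=
    hu.mono fun y hy => by simp [hy]
  rw [hui.fderiv_eq, fderiv_smul_const (hf.clm_apply (differentiableAt_const _))]
  exact Submodule.smul_mem _ _ (Submodule.mem_span_singleton_self ξ)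

theorem inftyLap_eq_smul (hu : ∀ᶠ y in 𝓝 x, u y = a + f y • ξ) (hf : ContDiffAt ℝ 2 f x) :
    inftyLap u x = (‖ξ‖ ^ 2 * scalarInftyLap f x) • ξ := by
  have hf1 : ∀ᶠ y in 𝓝 x, DifferentiableAt ℝ f y :=
    (hf.eventually (by simp)).mono fun y hy => hy.differentiableAt two_ne_zero
  have hf2 : DifferentiableAt ℝ (fderiv ℝ f) x :=
    (hf.fderiv_right (m := 1) (by norm_num)).differentiableAt one_ne_zero
  have hDu := fderiv_eventuallyEq_smulRight hu hf1
  have hDux : fderiv ℝ u x = (fderiv ℝ f x).smulRight ξ := hDu.eq_of_nhds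
  have henergy : HasFDerivAt (fun y => (1 / 2 : ℝ) * frob2 u y)
      (‖ξ‖ ^ 2 • (innerSL ℝ (gradient f x)).comp (fderiv ℝ (gradient f) x)) x := by
    refine ((hasFDerivAt_half_norm_sq_gradient (differentiableAt_gradient hf2)).const_mul
      (‖ξ‖ ^ 2)).congr_of_eventuallyEq ?_
    filter_upwards [hDu] with y hy
    rw [frob2_eq_of_fderiv_eq_smulRight hy]
    ring
  have htangential : fderiv ℝ u x (gradient (fun y => (1 / 2 : ℝ) * frob2 u y) x)
      = (‖ξ‖ ^ 2 * scalarInftyLap f x) • ξ := by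
    rw [hDux, ContinuousLinearMap.smulRight_apply, ← inner_gradient_left, real_inner_comm,
      inner_gradient_left, henergy.fderiv]
    rfl
  have hnormal : frob2 u x • perpProj (fderiv ℝ u x) (lapl u x) = 0 := by
    by_cases h : fderiv ℝ f x = 0
    · have hgrad : gradient f x = 0 := by simp [gradient, h]
      simp [frob2_eq_of_fderiv_eq_smulRight hDux, hgrad]
    · rw [hDux, perpProj_smulRight_eq_zero h (lapl_mem_span hDu hf2), smul_zero]
  rw [inftyLap, htangential, hnormal, add_zero]

end InftyLaplacian

theorem inftyLap_iff_scalar_general {n N : ℕ}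
    (Ω : Set (EuclideanSpace ℝ (Fin n))) (hΩ : IsOpen Ω)
    (a ξ : EuclideanSpace ℝ (Fin N)) (hξ : ‖ξ‖ = 1)
    (f : EuclideanSpace ℝ (Fin n) → ℝ) (hf : ContDiffOn ℝ 2 f Ω)
    (u : EuclideanSpace ℝ (Fin n) → EuclideanSpace ℝ (Fin N))
    (huform : ∀ x ∈ Ω, u x = a + f x • ξ) :
    (∀ x ∈ Ω, inftyLap u x = 0) ↔ (∀ x ∈ Ω, scalarInftyLap f x = 0) := by
  have hξ0 : ξ ≠ 0 := norm_ne_zero_iff.mp (by simp [hξ])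
  refine forall₂_congr fun x hx => ?_
  have hΩx := hΩ.mem_nhds hx
  rw [inftyLap_eq_smul (Filter.eventually_of_mem hΩx huform) (hf.contDiffAt hΩx), hξ, one_pow,
    one_mul, smul_eq_zero, or_iff_left hξ0]

/-- For `u = a + ξ f` on an open connected `Ω` with `|ξ| = 1` and `f` C², `u` solves the
∞-Laplace system `(Du ⊗ Du + |Du|² P^⊥(Du) ⊗ I) : D²u = 0` if and only if `f` solves the
scalar ∞-Laplace equation `Δ∞ f = 0`. -/
theorem inftyLap_iff_scalar {n N : ℕ}
    (Ω : Set (EuclideanSpace ℝ (Fin n))) (hΩ : IsOpen Ω) (hconn : IsConnected Ω)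
    (a ξ : EuclideanSpace ℝ (Fin N)) (hξ : ‖ξ‖ = 1)
    (f : EuclideanSpace ℝ (Fin n) → ℝ) (hf : ContDiffOn ℝ 2 f Ω)
    (u : EuclideanSpace ℝ (Fin n) → EuclideanSpace ℝ (Fin N))
    (hu : ContDiffOn ℝ 2 u Ω)
    (huform : ∀ x ∈ Ω, u x = a + f x • ξ) :
    (∀ x ∈ Ω, inftyLap u x = 0) ↔ (∀ x ∈ Ω, scalarInftyLap f x = 0) :=
  inftyLap_iff_scalar_general Ω hΩ a ξ hξ f hf u huform
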